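/- arXiv:1210.6722 — 2 statements merged into one kernel-verified Lean document; each statement's English description precedes it below -/
import Mathlib

section
/- Let G, H, U be bases of F_q^n with g_i · h_j = δ_{i,n-j+1}. Then the following two statements are equivalent: (1) ρ̄_G(g_i ∗ u_j) = k and (i,j) is one-way well-behaving with respect to (G,U); (2) ρ̄_H(h_{n-k+1} ∗ u_j) = n-i+1 and (n-k+1, j) is one-way well-behaving with respect to (H,U). -/
def Lspan (F : Type*) [Field F] {n : ℕ} (b : Fin n → Fin n → F) (l : ℕ) :
    Submodule F (Fin n → F) :=
  Submodule.span F (b '' {i | (i : ℕ) < l})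

noncomputable def rho (F : Type*) [Field F] {n : ℕ} (b : Fin n → Fin n → F)
    (v : Fin n → F) : ℕ :=
  sInf {l | v ∈ Lspan F b l}

def IsBasisFam (F : Type*) [Field F] {n : ℕ} (b : Fin n → Fin n → F) : Prop :=
  LinearIndependent F b ∧ Submodule.span F (Set.range b) = ⊤

def WB (F : Type*) [Field F] {n : ℕ} (b u : Fin n → Fin n → F) (i j : Fin n) : Prop :=
  ∀ i' j' : Fin n, i' ≤ i → j' ≤ j → (i', j') ≠ (i, j) →
    rho F b (b i' * u j') < rho F b (b i * u j)

def WWB (F : Type*) [Field F] {n : ℕ} (b u : Fin n → Fin n → F) (i j : Fin n) : Prop :=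
  (∀ i' : Fin n, i' < i → rho F b (b i' * u j) < rho F b (b i * u j)) ∧
  (∀ j' : Fin n, j' < j → rho F b (b i * u j') < rho F b (b i * u j))

def OWB (F : Type*) [Field F] {n : ℕ} (b u : Fin n → Fin n → F) (i j : Fin n) : Prop :=
  ∀ i' : Fin n, i' < i → rho F b (b i' * u j) < rho F b (b i * u j)

def LambdaWB (F : Type*) [Field F] {n : ℕ} (b u : Fin n → Fin n → F) (i : Fin n) : Set ℕ :=
  {l | ∃ j : Fin n, WB F b u i j ∧ rho F b (b i * u j) = l}

def LambdaOWB (F : Type*) [Field F] {n : ℕ} (b u : Fin n → Fin n → F) (i : Fin n) : Set ℕ :=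
  {l | ∃ j : Fin n, OWB F b u i j ∧ rho F b (b i * u j) = l}

noncomputable def sigmaWB (F : Type*) [Field F] {n : ℕ} (b u : Fin n → Fin n → F)
    (i : Fin n) : ℕ :=
  (LambdaWB F b u i).ncard

noncomputable def sigmaOWB (F : Type*) [Field F] {n : ℕ} (b u : Fin n → Fin n → F)
    (i : Fin n) : ℕ :=
  (LambdaOWB F b u i).ncard

def VWB (F : Type*) [Field F] {n : ℕ} (b u : Fin n → Fin n → F) (l : ℕ) : Set (Fin n) :=
  {i | ∃ j : Fin n, WB F b u i j ∧ rho F b (b i * u j) = l}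

def VOWB (F : Type*) [Field F] {n : ℕ} (b u : Fin n → Fin n → F) (l : ℕ) : Set (Fin n) :=
  {i | ∃ j : Fin n, OWB F b u i j ∧ rho F b (b i * u j) = l}

noncomputable def muWB (F : Type*) [Field F] {n : ℕ} (b u : Fin n → Fin n → F)
    (l : ℕ) : ℕ :=
  (VWB F b u l).ncard

noncomputable def muOWB (F : Type*) [Field F] {n : ℕ} (b u : Fin n → Fin n → F)
    (l : ℕ) : ℕ :=
  (VOWB F b u l).ncard

noncomputable def hwt {F : Type*} [Field F] {n : ℕ} (v : Fin n → F) : ℕ :=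
  Set.ncard {i | v i ≠ 0}

/-!
Fix `j` and put `A i' m = (g i' * u j) ⬝ᵥ h m`. Since `h` is the dual basis of `g` read
backwards, `ρ̄_G(g i' * u j) ≤ l` says that row `i'` of `A` vanishes in its first `n - l`
columns; since also `(h m * u j) ⬝ᵥ g i' = A i' m`, `ρ̄_H(h m * u j) ≤ l` says that column
`m` vanishes in its first `n - l` rows. In these terms each of the two conditions says exactly
that `A i (n - k)` is the only nonzero entry of `A` in the rectangle `[0, i] × [0, n - k]`, a
condition symmetric under transposition.
-/

section CornerPivot

variable {ι κ M : Type*} [Zero M]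

def IsCornerPivot [Preorder ι] [Preorder κ] (A : ι → κ → M) (a : ι) (b : κ) : Prop :=
  A a b ≠ 0 ∧ ∀ a' ≤ a, ∀ b' ≤ b, (a', b') ≠ (a, b) → A a' b' = 0

theorem isCornerPivot_swap [Preorder ι] [Preorder κ] {A : ι → κ → M} {a : ι} {b : κ} :
    IsCornerPivot (Function.swap A) b a ↔ IsCornerPivot A a b := by
  refine and_congr_right fun _ => ⟨fun h a' ha b' hb hne => ?_, fun h b' hb a' ha hne => ?_⟩
  · exact h b' hb a' ha fun e => hne (by simp_all)
  · exact h a' ha b' hb fun e => hne (by simp_all)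

theorem isCornerPivot_iff [PartialOrder ι] [PartialOrder κ] {A : ι → κ → M} {a : ι}
    {b : κ} :
    IsCornerPivot A a b ↔
      A a b ≠ 0 ∧ (∀ b' < b, A a b' = 0) ∧ ∀ a' < a, ∀ b' ≤ b, A a' b' = 0 := by
  refine and_congr_right fun _ => ⟨fun h => ⟨?_, ?_⟩, ?_⟩
  · exact fun b' hb => h a le_rfl b' hb.le (by simp [hb.ne])
  · exact fun a' ha b' hb => h a' ha.le b' hb (by simp [ha.ne])
  · rintro ⟨hrow, hbelow⟩ a' ha b' hb hne
    rcases ha.lt_or_eq with ha | rfl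
    · exact hbelow a' ha b' hb
    · exact hrow b' (hb.lt_of_ne (by simpa using hne))

end CornerPivot

section LeadingProfile

variable {M : Type*} [Zero M] {m n : ℕ}

/-- Equivalently, `r a` is `n` minus the index of the first nonzero entry of row `a`, and `0` on a
zero row. -/
def IsLeadingProfile (A : Fin m → Fin n → M) (r : Fin m → ℕ) : Prop :=
  ∀ a l, r a ≤ l ↔ ∀ b : Fin n, (b : ℕ) < n - l → A a b = 0

namespace IsLeadingProfile

variable {A : Fin m → Fin n → M} {r : Fin m → ℕ}

theorem lt_sub_iff (hr : IsLeadingProfile A r) (a : Fin m) (b : Fin n) :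
    r a < n - b ↔ ∀ b' ≤ b, A a b' = 0 := by
  rw [show r a < n - b ↔ r a ≤ n - b - 1 by omega, hr, show n - (n - b - 1) = b + 1 by omega]
  exact forall_congr' fun b' => by rw [Nat.lt_succ_iff, Fin.le_def]

theorem eq_sub_iff (hr : IsLeadingProfile A r) (a : Fin m) (b : Fin n) :
    r a = n - b ↔ A a b ≠ 0 ∧ ∀ b' < b, A a b' = 0 := by
  have hle : r a ≤ n - b ↔ ∀ b' < b, A a b' = 0 := by
    rw [hr, show n - (n - b) = (b : ℕ) by omega]
    rfl
  rw [le_antisymm_iff, hle, ← not_lt, hr.lt_sub_iff]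
  refine and_comm.trans <| and_congr_left fun hrow =>
    not_congr ⟨fun h => h b le_rfl, fun h b' hb => ?_⟩
  rcases hb.lt_or_eq with hb | rfl
  exacts [hrow b' hb, h]

theorem isCornerPivot_iff (hr : IsLeadingProfile A r) (a : Fin m) (b : Fin n) :
    (r a = n - b ∧ ∀ a' < a, r a' < r a) ↔ IsCornerPivot A a b := by
  rw [_root_.isCornerPivot_iff, ← and_assoc, ← hr.eq_sub_iff]
  refine and_congr_right fun he => forall₂_congr fun a' _ => ?_
  rw [he, hr.lt_sub_iff]

end IsLeadingProfile

end LeadingProfile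

theorem mul_dotProduct_comm {R ι : Type*} [CommSemiring R] [Fintype ι] (x y z : ι → R) :
    (x * y) ⬝ᵥ z = (z * y) ⬝ᵥ x :=
  Finset.sum_congr rfl fun _ _ => by simp only [Pi.mul_apply]; ring

section Filtration

variable {F : Type*} [Field F] {n : ℕ}

theorem Lspan_mono (b : Fin n → Fin n → F) : Monotone (Lspan F b) :=
  fun _ _ hl => Submodule.span_mono (Set.image_mono fun _ hi => lt_of_lt_of_le hi hl)

theorem rho_le_iff {b : Fin n → Fin n → F} (hb : Submodule.span F (Set.range b) = ⊤)
    (v : Fin n → F) (l : ℕ) : rho F b v ≤ l ↔ v ∈ Lspan F b l := by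
  refine ⟨fun hle => Lspan_mono b hle (Nat.sInf_mem (s := {l | v ∈ Lspan F b l}) ⟨n, ?_⟩),
    fun h => Nat.sInf_le h⟩
  rw [Set.mem_ofPred_eq, Lspan, show {i : Fin n | (i : ℕ) < n} = Set.univ by ext i; simp,
    Set.image_univ, hb]
  trivial

namespace IsBasisFam

variable {b : Fin n → Fin n → F}

noncomputable def toBasis (hb : IsBasisFam F b) : Module.Basis (Fin n) F (Fin n → F) :=
  Module.Basis.mk hb.1 hb.2.ge

theorem coe_toBasis (hb : IsBasisFam F b) : ⇑hb.toBasis = b :=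
  Module.Basis.coe_mk _ _

theorem mem_Lspan_iff (hb : IsBasisFam F b) (v : Fin n → F) (l : ℕ) :
    v ∈ Lspan F b l ↔ ∀ i : Fin n, l ≤ i → hb.toBasis.repr v i = 0 := by
  conv_lhs => rw [Lspan, ← hb.coe_toBasis]
  rw [Module.Basis.mem_span_image]
  refine forall_congr' fun i => ?_
  rw [Finset.mem_coe, Finsupp.mem_support_iff, Set.mem_ofPred_eq, not_imp_comm, not_lt]

theorem dotProduct_eq_repr_rev (hb : IsBasisFam F b) {c : Fin n → Fin n → F}
    (hbc : ∀ i j : Fin n, b i ⬝ᵥ c j = if (i : ℕ) + (j : ℕ) + 1 = n then 1 else 0)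
    (v : Fin n → F) (j : Fin n) : v ⬝ᵥ c j = hb.toBasis.repr v j.rev := by
  have hrev : ∀ i : Fin n, (i : ℕ) + (j : ℕ) + 1 = n ↔ i = j.rev := fun i => by
    rw [Fin.ext_iff, Fin.val_rev]
    omega
  conv_lhs => rw [← hb.toBasis.sum_repr v, hb.coe_toBasis]
  simp only [sum_dotProduct, smul_dotProduct, hbc, hrev, smul_eq_mul, mul_ite, mul_one, mul_zero,
    Finset.sum_ite_eq', Finset.mem_univ, if_true]

theorem rho_le_iff_dotProduct (hb : IsBasisFam F b) {c : Fin n → Fin n → F}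
    (hbc : ∀ i j : Fin n, b i ⬝ᵥ c j = if (i : ℕ) + (j : ℕ) + 1 = n then 1 else 0)
    (v : Fin n → F) (l : ℕ) :
    rho F b v ≤ l ↔ ∀ m : Fin n, (m : ℕ) < n - l → v ⬝ᵥ c m = 0 := by
  rw [rho_le_iff hb.2, hb.mem_Lspan_iff, ← Fin.revPerm.forall_congr_right]
  refine forall_congr' fun m => ?_
  rw [Fin.revPerm_apply, hb.dotProduct_eq_repr_rev hbc, Fin.val_rev]
  exact imp_congr_left (by omega)

end IsBasisFam

end Filtration

theorem stmt6 {F : Type*} [Field F] {n : ℕ} (g h u : Fin n → Fin n → F)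
    (hg : IsBasisFam F g) (hh : IsBasisFam F h)
    (hGH : ∀ i j : Fin n,
      dotProduct (g i) (h j) = if (i : ℕ) + (j : ℕ) + 1 = n then 1 else 0)
    (i j : Fin n) (k : ℕ) (hk1 : 1 ≤ k) (hk2 : k ≤ n) :
    (rho F g (g i * u j) = k ∧ OWB F g u i j) ↔
      (rho F h (h ⟨n - k, by omega⟩ * u j) = n - (i : ℕ) ∧
        OWB F h u ⟨n - k, by omega⟩ j) := by
  have hHG : ∀ a b : Fin n, h a ⬝ᵥ g b = if (a : ℕ) + (b : ℕ) + 1 = n then 1 else 0 :=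
    fun a b => by rw [dotProduct_comm, hGH, Nat.add_comm (b : ℕ)]
  let A : Fin n → Fin n → F := fun i' m => (g i' * u j) ⬝ᵥ h m
  have hrowG : IsLeadingProfile A fun i' => rho F g (g i' * u j) :=
    fun i' => hg.rho_le_iff_dotProduct hGH _
  have hcolH : IsLeadingProfile (Function.swap A) fun m => rho F h (h m * u j) := fun m l =>
    (hh.rho_le_iff_dotProduct hHG _ l).trans (by simp only [mul_dotProduct_comm (h m)]; rfl)
  calc _ ↔ rho F g (g i * u j) = n - (n - k) ∧ OWB F g u i j := by rw [Nat.sub_sub_self hk2]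
    _ ↔ IsCornerPivot A i ⟨n - k, by omega⟩ :=
      hrowG.isCornerPivot_iff i ⟨n - k, by omega⟩
    _ ↔ IsCornerPivot (Function.swap A) ⟨n - k, by omega⟩ i := isCornerPivot_swap.symm
    _ ↔ _ := (hcolH.isCornerPivot_iff _ i).symm
end

section
/- Let R, ρ, φ, Δ(R,ρ,φ) = {α(1), ..., α(n)} and B = {b_i = φ(f_{α(i)})} be as in the order-domain code construction. If γ, λ ∈ Γ satisfy γ + λ = α(l) for some α(l) ∈ Δ(R,ρ,φ), then γ = α(i) and λ = α(j) for some i, j ∈ {1,...,n}, the pair (i,j) is well-behaving with respect to (B,B), and ρ̄_B(b_i ∗ b_j) = l. -/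
structure MonOrd (r : ℕ) where
  lt : (Fin r → ℕ) → (Fin r → ℕ) → Prop
  irrefl : ∀ a, ¬ lt a a
  trans : ∀ a b c, lt a b → lt b c → lt a c
  total : ∀ a b, lt a b ∨ a = b ∨ lt b a
  zero_le : ∀ a, a = 0 ∨ lt 0 a
  add_right : ∀ a b c, lt a b → lt (a + c) (b + c)

def MonOrd.wlt {r : ℕ} (mo : MonOrd r)
    (x y : WithBot (Fin r → ℕ)) : Prop :=
  (x = ⊥ ∧ y ≠ ⊥) ∨ ∃ a b : Fin r → ℕ, x = ↑a ∧ y = ↑b ∧ mo.lt a b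

def MonOrd.wle {r : ℕ} (mo : MonOrd r)
    (x y : WithBot (Fin r → ℕ)) : Prop :=
  mo.wlt x y ∨ x = y

structure WeightFunction (Fq R : Type*) [Field Fq] [CommRing R] [Algebra Fq R]
    (r : ℕ) where
  mo : MonOrd r
  Γ : Set (Fin r → ℕ)
  add_mem : ∀ a ∈ Γ, ∀ b ∈ Γ, a + b ∈ Γ
  rho : R → WithBot (Fin r → ℕ)
  surj : ∀ γ ∈ Γ, ∃ f : R, rho f = ↑γ
  mem_Γ : ∀ f : R, rho f ≠ ⊥ → ∃ γ ∈ Γ, rho f = ↑γ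
  W0 : ∀ f : R, rho f = ⊥ ↔ f = 0
  W1 : ∀ (a : Fq) (f : R), a ≠ 0 → rho (a • f) = rho f
  W2a : ∀ f g : R, mo.wle (rho (f + g)) (rho f) ∨ mo.wle (rho (f + g)) (rho g)
  W2b : ∀ f g : R, mo.wlt (rho f) (rho g) → rho (f + g) = rho g
  W3 : ∀ f g h : R, mo.wlt (rho f) (rho g) → h ≠ 0 →
    mo.wlt (rho (f * h)) (rho (g * h))
  W4 : ∀ f g : R, f ≠ 0 → g ≠ 0 → rho f = rho g →
    ∃ a : Fq, a ≠ 0 ∧ mo.wlt (rho (f - a • g)) (rho g)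
  W5 : ∀ f g : R, f ≠ 0 → g ≠ 0 → ∀ γ δ : Fin r → ℕ,
    rho f = ↑γ → rho g = ↑δ → rho (f * g) = ↑(γ + δ)

def Rsub {Fq R : Type*} [Field Fq] [CommRing R] [Algebra Fq R] {r : ℕ}
    (W : WeightFunction Fq R r) (γ : Fin r → ℕ) : Set R :=
  {h : R | W.mo.wle (W.rho h) ↑γ}

def IsJump {Fq R : Type*} [Field Fq] [CommRing R] [Algebra Fq R] {r n : ℕ}
    (W : WeightFunction Fq R r) (φ : R → Fin n → Fq) (η : Fin r → ℕ) : Prop :=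
  η ∈ W.Γ ∧ ∀ γ ∈ W.Γ, W.mo.lt γ η → φ '' Rsub W γ ⊂ φ '' Rsub W η


/-
Write `b_i = φ(f_i)`. Every `φ h` lies in the span of the `b_k` with `α k ⪯ ρ(h)`: at a jump weight
subtract a multiple of the matching `f_k` (W4), at a non-jump weight replace `h` by an element of
smaller weight with the same image, and conclude by well-founded induction. Hence the `b_k` span
`F_q^n`, so they are a basis, and consequently no element of weight `α m` can have the same image
as an element of smaller weight. This gives `ρ̄_B(φ h) = m + 1` whenever `ρ(h) = α m`.
If `γ + δ = α l` and `γ` were not a jump, some `g` of weight `≺ γ` would satisfy `φ g = φ f_γ`;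
multiplying by `f_δ` produces two elements with the same image and weights `≺ α l` and `= α l`,
which is impossible. So `γ = α i`, `δ = α j`, and `ρ̄_B(b_i ∗ b_j) = l + 1` while every smaller
pair `(i', j')` has `α i' + α j' ≺ α l`, hence `ρ̄_B(b_i' ∗ b_j') ≤ l`.
-/

namespace MonOrd

variable {r : ℕ} {mo : MonOrd r}

lemma wlt_coe_iff {a c : Fin r → ℕ} : mo.wlt ↑a ↑c ↔ mo.lt a c := by
  constructor
  · rintro (⟨h, -⟩ | ⟨a', c', ha, hc, h⟩)
    · exact absurd h WithBot.coe_ne_bot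
    · rw [WithBot.coe_inj] at ha hc
      subst ha hc
      exact h
  · exact fun h => Or.inr ⟨a, c, rfl, rfl, h⟩

lemma bot_wlt {c : Fin r → ℕ} : mo.wlt ⊥ ↑c := Or.inl ⟨rfl, WithBot.coe_ne_bot⟩

lemma wlt_trans {x y z} (h₁ : mo.wlt x y) (h₂ : mo.wlt y z) : mo.wlt x z := by
  rcases h₁ with ⟨rfl, hy⟩ | ⟨a, c, rfl, rfl, h⟩
  · rcases h₂ with ⟨rfl, -⟩ | ⟨-, c', -, rfl, -⟩
    · exact absurd rfl hy
    · exact bot_wlt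
  · rcases h₂ with ⟨hy, -⟩ | ⟨a', c', hy, rfl, h'⟩
    · exact absurd hy WithBot.coe_ne_bot
    · rw [WithBot.coe_inj] at hy
      subst hy
      exact wlt_coe_iff.2 (mo.trans _ _ _ h h')

lemma wle_wlt_trans {x y z} (h₁ : mo.wle x y) (h₂ : mo.wlt y z) : mo.wlt x z := by
  rcases h₁ with h₁ | rfl
  exacts [wlt_trans h₁ h₂, h₂]

lemma wle_trans {x y z} (h₁ : mo.wle x y) (h₂ : mo.wle y z) : mo.wle x z := by
  rcases h₂ with h₂ | rfl
  exacts [Or.inl (wle_wlt_trans h₁ h₂), h₁]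

lemma lt_of_le_of_ne {a c : Fin r → ℕ} (hle : a ≤ c) (hne : a ≠ c) : mo.lt a c := by
  have hc : a + (c - a) = c := by
    funext i
    have : a i ≤ c i := hle i
    simp only [Pi.add_apply, Pi.sub_apply]
    omega
  rcases mo.zero_le (c - a) with h0 | h0
  · exact absurd (by rw [← hc, h0, add_zero]) hne
  · have h := mo.add_right 0 (c - a) a h0
    rwa [zero_add, add_comm, hc] at h

lemma lt_wf (mo : MonOrd r) : WellFounded mo.lt := by
  have : IsStrictOrder (Fin r → ℕ) mo.lt := { irrefl := mo.irrefl, trans := mo.trans }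
  rw [RelEmbedding.wellFounded_iff_isEmpty]
  refine ⟨fun g => ?_⟩
  obtain ⟨i, j, hij, hle⟩ := wellQuasiOrdered_le (fun k => g k)
  have hlt : mo.lt (g j) (g i) := g.map_rel_iff.2 hij
  rcases eq_or_ne (g i) (g j) with heq | hne
  · exact mo.irrefl _ (heq ▸ hlt)
  · exact mo.irrefl _ (mo.trans _ _ _ (lt_of_le_of_ne hle hne) hlt)

lemma add_left {a b : Fin r → ℕ} (c : Fin r → ℕ) (h : mo.lt a b) : mo.lt (c + a) (c + b) := by
  simpa only [add_comm c] using mo.add_right a b c h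

lemma add_lt_add {a b c d : Fin r → ℕ} (h₁ : mo.lt a b) (h₂ : c = d ∨ mo.lt c d) :
    mo.lt (a + c) (b + d) := by
  rcases h₂ with rfl | h₂
  · exact mo.add_right a b c h₁
  · exact mo.trans _ _ _ (mo.add_right a b c h₁) (add_left b h₂)

section StrictMono

variable {ι : Type*} [LinearOrder ι] {α : ι → Fin r → ℕ}

lemma eq_or_lt_of_le (hα : ∀ i j, i < j → mo.lt (α i) (α j)) {i j : ι} (h : i ≤ j) :
    α i = α j ∨ mo.lt (α i) (α j) :=
  h.eq_or_lt.imp (congrArg α) (hα i j)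

lemma lt_of_apply_lt (hα : ∀ i j, i < j → mo.lt (α i) (α j)) {i j : ι}
    (h : mo.lt (α i) (α j)) : i < j := by
  by_contra! hji
  rcases eq_or_lt_of_le hα hji with heq | hlt
  · exact mo.irrefl _ (heq ▸ h)
  · exact mo.irrefl _ (mo.trans _ _ _ h hlt)

lemma le_of_apply_wle (hα : ∀ i j, i < j → mo.lt (α i) (α j)) {i j : ι}
    (h : mo.wle ↑(α i) ↑(α j)) : i ≤ j := by
  rcases h with h | h
  · exact (lt_of_apply_lt hα (wlt_coe_iff.1 h)).le
  · by_contra! hji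
    exact mo.irrefl _ ((WithBot.coe_inj.1 h) ▸ hα j i hji)

lemma add_lt_add_of_le_of_le (hα : ∀ i j, i < j → mo.lt (α i) (α j)) {i i' j j' : ι}
    (hi : i' ≤ i) (hj : j' ≤ j) (hne : (i', j') ≠ (i, j)) :
    mo.lt (α i' + α j') (α i + α j) := by
  rcases hi.lt_or_eq with hi | rfl
  · exact add_lt_add (hα _ _ hi) (eq_or_lt_of_le hα hj)
  · exact add_left _ (hα _ _ (hj.lt_of_ne fun h => hne (h ▸ rfl)))

end StrictMono

end MonOrd

section Filtration

variable {F : Type*} [Field F] {n : ℕ} {b : Fin n → Fin n → F}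

lemma Lspan_mono_s14 {l l' : ℕ} (h : l ≤ l') : Lspan F b l ≤ Lspan F b l' :=
  Submodule.span_mono (Set.image_mono fun _ hi => lt_of_lt_of_le hi h)

lemma rho_eq_succ {v : Fin n → F} {m : ℕ} (h₁ : v ∈ Lspan F b (m + 1))
    (h₂ : v ∉ Lspan F b m) : rho F b v = m + 1 := by
  refine le_antisymm (Nat.sInf_le h₁) (Nat.succ_le_of_lt (lt_of_not_ge fun hle => h₂ ?_))
  exact Lspan_mono_s14 hle (Nat.sInf_mem (s := {l | v ∈ Lspan F b l}) ⟨_, h₁⟩)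

end Filtration

namespace WeightFunction

variable {Fq R : Type*} [Field Fq] [CommRing R] [Algebra Fq R] {r n : ℕ}
  {W : WeightFunction Fq R r}

lemma ne_zero_of_rho_eq_coe {g : R} {ε : Fin r → ℕ} (h : W.rho g = ↑ε) : g ≠ 0 := by
  rintro rfl
  exact WithBot.bot_ne_coe (((W.W0 0).2 rfl).symm.trans h)

variable (W) in
def ltSubmodule (η : Fin r → ℕ) : Submodule Fq R where
  carrier := {g | W.mo.wlt (W.rho g) ↑η}
  zero_mem' := by
    show W.mo.wlt _ _
    rw [(W.W0 0).2 rfl]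
    exact MonOrd.bot_wlt
  add_mem' {x y} hx hy := by
    rcases W.W2a x y with h | h
    exacts [MonOrd.wle_wlt_trans h hx, MonOrd.wle_wlt_trans h hy]
  smul_mem' a x hx := by
    rcases eq_or_ne a 0 with rfl | ha
    · show W.mo.wlt _ _
      rw [zero_smul, (W.W0 0).2 rfl]
      exact MonOrd.bot_wlt
    · show W.mo.wlt _ _
      rw [W.W1 a x ha]
      exact hx

lemma exists_map_eq_of_not_isJump {φ : R → Fin n → Fq} {ε : Fin r → ℕ} (hε : ε ∈ W.Γ)
    (hj : ¬IsJump W φ ε) {h : R} (hh : W.mo.wle (W.rho h) ↑ε) :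
    ∃ g, W.mo.wlt (W.rho g) ↑ε ∧ φ g = φ h := by
  simp only [IsJump, hε, true_and, not_forall] at hj
  obtain ⟨γ, -, hγε, hns⟩ := hj
  have hγε' : W.mo.wlt ↑γ ↑ε := MonOrd.wlt_coe_iff.2 hγε
  have hsub : φ '' Rsub W γ ⊆ φ '' Rsub W ε :=
    Set.image_mono fun _ hx => MonOrd.wle_trans hx (Or.inl hγε')
  have hsup : φ '' Rsub W ε ⊆ φ '' Rsub W γ := by
    by_contra hsup
    exact hns (ssubset_iff_subset_not_superset.2 ⟨hsub, hsup⟩)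
  obtain ⟨g, hg, hφg⟩ := hsup ⟨h, hh, rfl⟩
  exact ⟨g, MonOrd.wle_wlt_trans hg hγε', hφg⟩

end WeightFunction

section JumpLift

variable {Fq R : Type*} [Field Fq] [CommRing R] [Algebra Fq R] {r n : ℕ}
  {W : WeightFunction Fq R r}

structure IsJumpLift (W : WeightFunction Fq R r) (φ : R → Fin n → Fq) (α : Fin n → Fin r → ℕ)
    (f : Fin n → R) : Prop where
  rho_eq : ∀ i, W.rho (f i) = ↑(α i)
  exists_eq_of_isJump : ∀ η, IsJump W φ η → ∃ i, α i = η

variable {φ : R →ₗ[Fq] Fin n → Fq} {α : Fin n → Fin r → ℕ} {f : Fin n → R}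

namespace IsJumpLift

lemma map_mem_span (hL : IsJumpLift W φ α f) (h : R) :
    φ h ∈ Submodule.span Fq ((φ ∘ f) '' {k | W.mo.wle ↑(α k) (W.rho h)}) := by
  set S : WithBot (Fin r → ℕ) → Submodule Fq (Fin n → Fq) :=
    fun x => Submodule.span Fq ((φ ∘ f) '' {k | W.mo.wle ↑(α k) x})
  have S_mono {x y} (hxy : W.mo.wle x y) : S x ≤ S y :=
    Submodule.span_mono (Set.image_mono fun _ hk => MonOrd.wle_trans hk hxy)
  suffices key : ∀ (ε : Fin r → ℕ) h, W.rho h = ↑ε → φ h ∈ S ↑ε by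
    cases hρ : W.rho h with
    | bot => simp [(W.W0 h).1 hρ]
    | coe ε => exact key ε h hρ
  intro ε
  induction ε using (MonOrd.lt_wf W.mo).induction with
  | _ ε IH =>
    intro h hρ
    have below : ∀ g, W.mo.wlt (W.rho g) ↑ε → φ g ∈ S ↑ε := by
      intro g hg
      cases hρg : W.rho g with
      | bot => simp [(W.W0 g).1 hρg]
      | coe ε' =>
        rw [hρg, MonOrd.wlt_coe_iff] at hg
        exact S_mono (Or.inl (MonOrd.wlt_coe_iff.2 hg)) (IH ε' hg g hρg)
    by_cases hj : IsJump W φ ε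
    · obtain ⟨m, rfl⟩ := hL.exists_eq_of_isJump _ hj
      obtain ⟨a, -, hlt⟩ := W.W4 h (f m) (W.ne_zero_of_rho_eq_coe hρ)
        (W.ne_zero_of_rho_eq_coe (hL.rho_eq m)) (hρ.trans (hL.rho_eq m).symm)
      rw [hL.rho_eq m] at hlt
      have hbm : φ (f m) ∈ S ↑(α m) := Submodule.subset_span ⟨m, Or.inr rfl, rfl⟩
      rw [← sub_add_cancel h (a • f m), map_add, map_smul]
      exact add_mem (below _ hlt) (Submodule.smul_mem _ a hbm)
    · obtain ⟨εΓ, hεΓ, hε⟩ := W.mem_Γ h (hρ ▸ WithBot.coe_ne_bot)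
      rw [hρ, WithBot.coe_inj] at hε
      obtain ⟨g, hg, hφg⟩ := W.exists_map_eq_of_not_isJump (hε ▸ hεΓ) hj (Or.inr hρ)
      exact hφg ▸ below g hg

lemma linearIndependent (hL : IsJumpLift W φ α f) (hφ : Function.Surjective φ) :
    LinearIndependent Fq (φ ∘ f) := by
  refine linearIndependent_of_top_le_span_of_card_eq_finrank (fun v _ => ?_) (by simp)
  obtain ⟨h, rfl⟩ := hφ v
  exact Submodule.span_mono (Set.image_subset_range _ _) (hL.map_mem_span h)

lemma apply_notMem_map_ltSubmodule (hL : IsJumpLift W φ α f) (hφ : Function.Surjective φ)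
    (m : Fin n) : φ (f m) ∉ (W.ltSubmodule (α m)).map φ := by
  rintro ⟨g, hg, hφg⟩
  have hsub : {k | W.mo.wle ↑(α k) (W.rho g)} ⊆ {k | k ≠ m} := by
    rintro k hk rfl
    exact W.mo.irrefl _ (MonOrd.wlt_coe_iff.1 (MonOrd.wle_wlt_trans hk hg))
  exact (hL.linearIndependent hφ).notMem_span_image (s := {k | k ≠ m}) (by simp)
    (Submodule.span_mono (Set.image_mono hsub) (hφg ▸ hL.map_mem_span g))

lemma map_ne_of_wlt (hL : IsJumpLift W φ α f) (hφ : Function.Surjective φ) {m : Fin n}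
    {g h : R} (hh : W.rho h = ↑(α m)) (hg : W.mo.wlt (W.rho g) ↑(α m)) : φ g ≠ φ h := by
  intro hφgh
  obtain ⟨a, -, hlt⟩ := W.W4 (f m) h (W.ne_zero_of_rho_eq_coe (hL.rho_eq m))
    (W.ne_zero_of_rho_eq_coe hh) ((hL.rho_eq m).trans hh.symm)
  rw [hh] at hlt
  have hmem : f m - a • h + a • g ∈ W.ltSubmodule (α m) :=
    add_mem hlt (Submodule.smul_mem _ a hg)
  refine hL.apply_notMem_map_ltSubmodule hφ m ⟨_, hmem, ?_⟩
  rw [map_add, map_sub, map_smul, map_smul, hφgh, sub_add_cancel]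

lemma isJump_of_add_eq (hL : IsJumpLift W φ α f) (hφ : Function.Surjective φ)
    (hφmul : ∀ x y, φ (x * y) = φ x * φ y) {γ δ : Fin r → ℕ} (hγ : γ ∈ W.Γ) (hδ : δ ∈ W.Γ)
    {l : Fin n} (hsum : γ + δ = α l) : IsJump W φ γ := by
  by_contra hj
  obtain ⟨fγ, hfγ⟩ := W.surj γ hγ
  obtain ⟨fδ, hfδ⟩ := W.surj δ hδ
  obtain ⟨g, hg, hφg⟩ := W.exists_map_eq_of_not_isJump hγ hj (Or.inr hfγ)
  have hprod : W.rho (fγ * fδ) = ↑(α l) := by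
    rw [W.W5 _ _ (W.ne_zero_of_rho_eq_coe hfγ) (W.ne_zero_of_rho_eq_coe hfδ) γ δ hfγ hfδ, hsum]
  have hlt : W.mo.wlt (W.rho (g * fδ)) ↑(α l) :=
    hprod ▸ W.W3 g fγ fδ (hfγ ▸ hg) (W.ne_zero_of_rho_eq_coe hfδ)
  exact hL.map_ne_of_wlt hφ hprod hlt (by rw [hφmul, hφmul, hφg])

lemma rho_mul_eq (hL : IsJumpLift W φ α f) (i j : Fin n) :
    W.rho (f i * f j) = ↑(α i + α j) :=
  W.W5 _ _ (W.ne_zero_of_rho_eq_coe (hL.rho_eq i)) (W.ne_zero_of_rho_eq_coe (hL.rho_eq j)) _ _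
    (hL.rho_eq i) (hL.rho_eq j)

lemma map_mem_Lspan (hL : IsJumpLift W φ α f) {h : R} {l : ℕ}
    (hl : ∀ k, W.mo.wle ↑(α k) (W.rho h) → (k : ℕ) < l) : φ h ∈ Lspan Fq (φ ∘ f) l :=
  Submodule.span_mono (Set.image_mono hl) (hL.map_mem_span h)

lemma rho_map_eq (hL : IsJumpLift W φ α f) (hφ : Function.Surjective φ)
    (hmono : ∀ i j : Fin n, i < j → W.mo.lt (α i) (α j)) {h : R} {m : Fin n}
    (hh : W.rho h = ↑(α m)) : rho Fq (φ ∘ f) (φ h) = (m : ℕ) + 1 := by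
  refine rho_eq_succ (hL.map_mem_Lspan fun k hk => ?_) fun hmem => ?_
  · exact Nat.lt_succ_of_le (MonOrd.le_of_apply_wle hmono (hh ▸ hk))
  · have hle : Lspan Fq (φ ∘ f) m ≤ (W.ltSubmodule (α m)).map φ := by
      refine Submodule.span_le.2 ?_
      rintro _ ⟨k, hk, rfl⟩
      refine ⟨f k, ?_, rfl⟩
      show W.mo.wlt _ _
      rw [hL.rho_eq k, MonOrd.wlt_coe_iff]
      exact hmono k m hk
    obtain ⟨g, hg, hφg⟩ := hle hmem
    exact hL.map_ne_of_wlt hφ hh hg hφg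

lemma rho_map_le (hL : IsJumpLift W φ α f)
    (hmono : ∀ i j : Fin n, i < j → W.mo.lt (α i) (α j)) {h : R} {l : Fin n}
    (hh : W.mo.wlt (W.rho h) ↑(α l)) : rho Fq (φ ∘ f) (φ h) ≤ l :=
  Nat.sInf_le <| hL.map_mem_Lspan fun _ hk =>
    MonOrd.lt_of_apply_lt hmono (MonOrd.wlt_coe_iff.1 (MonOrd.wle_wlt_trans hk hh))

end IsJumpLift

end JumpLift

theorem stmt14_general {Fq R : Type*} [Field Fq] [CommRing R] [Algebra Fq R] {r n : ℕ}
    (W : WeightFunction Fq R r) (φ : R → Fin n → Fq)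
    (hφsurj : Function.Surjective φ) (hφlin : IsLinearMap Fq φ)
    (hφmul : ∀ f g : R, φ (f * g) = φ f * φ g)
    (α : Fin n → Fin r → ℕ)
    (hmono : ∀ i j : Fin n, i < j → W.mo.lt (α i) (α j))
    (hcompl : ∀ η : Fin r → ℕ, IsJump W φ η → ∃ i : Fin n, α i = η)
    (f : Fin n → R) (hf : ∀ i : Fin n, W.rho (f i) = ↑(α i))
    (b : Fin n → Fin n → Fq) (hb : ∀ i : Fin n, b i = φ (f i)) :
    ∀ γ ∈ W.Γ, ∀ δ ∈ W.Γ, ∀ l : Fin n, γ + δ = α l →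
      ∃ i j : Fin n, α i = γ ∧ α j = δ ∧ WB Fq b b i j ∧
        rho Fq b (b i * b j) = (l : ℕ) + 1 := by
  intro γ hγ δ hδ l hsum
  set L := hφlin.mk' φ
  have hL : IsJumpLift W L α f := ⟨hf, hcompl⟩
  have hLmul : ∀ x y, L (x * y) = L x * L y := hφmul
  obtain rfl : b = L ∘ f := funext hb
  obtain ⟨i, rfl⟩ := hcompl γ (hL.isJump_of_add_eq hφsurj hLmul hγ hδ hsum)
  obtain ⟨j, rfl⟩ := hcompl δ (hL.isJump_of_add_eq hφsurj hLmul hδ hγ ((add_comm _ _).trans hsum))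
  have hval : rho Fq (L ∘ f) ((L ∘ f) i * (L ∘ f) j) = (l : ℕ) + 1 := by
    rw [Function.comp_apply, Function.comp_apply, ← hLmul]
    exact hL.rho_map_eq hφsurj hmono ((hL.rho_mul_eq i j).trans (congrArg _ hsum))
  refine ⟨i, j, rfl, rfl, fun i' j' hi' hj' hne => ?_, hval⟩
  have hlt := MonOrd.add_lt_add_of_le_of_le hmono hi' hj' hne
  rw [hsum, ← MonOrd.wlt_coe_iff, ← hL.rho_mul_eq] at hlt
  rw [hval, Function.comp_apply, Function.comp_apply, ← hLmul]
  exact Nat.lt_succ_of_le (hL.rho_map_le hmono hlt)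

theorem stmt14 {Fq R : Type*} [Field Fq] [CommRing R] [Algebra Fq R] {r n : ℕ}
    (W : WeightFunction Fq R r) (φ : R → Fin n → Fq)
    (hφsurj : Function.Surjective φ) (hφlin : IsLinearMap Fq φ)
    (hφmul : ∀ f g : R, φ (f * g) = φ f * φ g)
    (α : Fin n → Fin r → ℕ)
    (hα0 : ∀ h0 : 0 < n, α ⟨0, h0⟩ = 0)
    (hmono : ∀ i j : Fin n, i < j → W.mo.lt (α i) (α j))
    (hjump : ∀ i : Fin n, IsJump W φ (α i))
    (hcompl : ∀ η : Fin r → ℕ, IsJump W φ η → ∃ i : Fin n, α i = η)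
    (f : Fin n → R) (hf : ∀ i : Fin n, W.rho (f i) = ↑(α i))
    (b : Fin n → Fin n → Fq) (hb : ∀ i : Fin n, b i = φ (f i)) :
    ∀ γ ∈ W.Γ, ∀ δ ∈ W.Γ, ∀ l : Fin n, γ + δ = α l →
      ∃ i j : Fin n, α i = γ ∧ α j = δ ∧ WB Fq b b i j ∧
        rho Fq b (b i * b j) = (l : ℕ) + 1 :=
  stmt14_general W φ hφsurj hφlin hφmul α hmono hcompl f hf b hb
end
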